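/- Integrality of Bareiss elimination: let A be an n×n matrix with integer entries, regarded as a matrix over ℚ, whose leading principal minors p_1(A),…,p_{n−1}(A) are all nonzero. Define the tableaux α^{(k)} over ℚ by α^{(1)}_{i,j} = A_{i,j} and α^{(k+1)}_{i,j} = (α^{(k)}_{k,k} · α^{(k)}_{i,j} − α^{(k)}_{i,k} · α^{(k)}_{k,j}) / α^{(k−1)}_{k−1,k−1} for i, j > k (divisor 1 when k = 1). Then every entry α^{(k)}_{i,j} (1 ≤ k ≤ n, i, j ≥ k) is an integer, i.e. lies in the image of ℤ in ℚ. -/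

import Mathlib

def pminor {R : Type*} [CommRing R] {n : ℕ} (A : Matrix (Fin n) (Fin n) R)
    (k : ℕ) (h : k ≤ n) : R :=
  (A.submatrix (Fin.castLE h) (Fin.castLE h)).det

/-!
The Bareiss tableau entry `α^{(m+1)}_{i,j}` is the bordered minor of `A` on rows
`1, …, m, i` and columns `1, …, m, j`. By induction on `m`, the recursion step is Sylvester's
identity: the Schur complement of the leading `m × m` block of the matrix on rows
`1, …, m, m+1, i` and columns `1, …, m, m+1, j` is `2 × 2`, and its entries are the four
bordered minors of order `m + 1` divided by `p_m(A)`. Minors of an integer matrix are integers.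
-/

open Matrix

variable {R : Type*} [CommRing R]

def borderedMinor {ι κ m : Type*} [Fintype m] [DecidableEq m] (A : Matrix ι κ R)
    (f : m → ι) (g : m → κ) (i : ι) (j : κ) : R :=
  (A.submatrix (Sum.elim f fun _ : Fin 1 => i) (Sum.elim g fun _ : Fin 1 => j)).det

theorem borderedMinor_submatrix_sumElim {ι κ m o : Type*} [Fintype m] [DecidableEq m]
    (A : Matrix ι κ R) (f : m → ι) (g : m → κ) (u : o → ι) (v : o → κ) (r s : o) :
    borderedMinor (A.submatrix (Sum.elim f u) (Sum.elim g v)) Sum.inl Sum.inl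
      (Sum.inr r) (Sum.inr s) = borderedMinor A f g (u r) (v s) := by
  unfold borderedMinor
  congr 1
  ext (a | a) (b | b) <;> rfl

theorem borderedMinor_inl_inr {m o : Type*} [Fintype m] [DecidableEq m]
    (M : Matrix (m ⊕ o) (m ⊕ o) R) [Invertible M.toBlocks₁₁] (r s : o) :
    borderedMinor M Sum.inl Sum.inl (Sum.inr r) (Sum.inr s) =
      M.toBlocks₁₁.det *
        (M.toBlocks₂₂ - M.toBlocks₂₁ * ⅟M.toBlocks₁₁ * M.toBlocks₁₂) r s := by
  have hblocks : M.submatrix (Sum.elim Sum.inl fun _ : Fin 1 => Sum.inr r)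
      (Sum.elim Sum.inl fun _ : Fin 1 => Sum.inr s) =
      fromBlocks M.toBlocks₁₁ (M.toBlocks₁₂.submatrix id fun _ => s)
        (M.toBlocks₂₁.submatrix (fun _ => r) id) (of fun _ _ => M.toBlocks₂₂ r s) := by
    ext (a | a) (b | b) <;> rfl
  rw [borderedMinor, hblocks, det_fromBlocks₁₁, det_fin_one]
  rfl

/-- Sylvester's determinant identity for a `2 × 2` border. -/
theorem det_mul_det_toBlocks₁₁_eq {m : Type*} [Fintype m] [DecidableEq m]
    (M : Matrix (m ⊕ Fin 2) (m ⊕ Fin 2) R) (hM : IsUnit M.toBlocks₁₁.det) :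
    M.det * M.toBlocks₁₁.det =
      borderedMinor M Sum.inl Sum.inl (Sum.inr 0) (Sum.inr 0) *
          borderedMinor M Sum.inl Sum.inl (Sum.inr 1) (Sum.inr 1) -
        borderedMinor M Sum.inl Sum.inl (Sum.inr 0) (Sum.inr 1) *
          borderedMinor M Sum.inl Sum.inl (Sum.inr 1) (Sum.inr 0) := by
  let _ := M.toBlocks₁₁.invertibleOfIsUnitDet hM
  have hschur : M.det = M.toBlocks₁₁.det *
      (M.toBlocks₂₂ - M.toBlocks₂₁ * ⅟M.toBlocks₁₁ * M.toBlocks₁₂).det := by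
    conv_lhs => rw [← fromBlocks_toBlocks M]
    exact det_fromBlocks₁₁ ..
  simp only [hschur, borderedMinor_inl_inr M, det_fin_two]
  ring

theorem borderedMinor_of_isEmpty {ι κ m : Type*} [Fintype m] [DecidableEq m] [IsEmpty m]
    (A : Matrix ι κ R) (f : m → ι) (g : m → κ) (i : ι) (j : κ) :
    borderedMinor A f g i j = A i j := by
  let _ : Unique (m ⊕ Fin 1) := (Equiv.emptySum m (Fin 1)).unique
  exact det_unique _

theorem RingHom.map_borderedMinor {S ι κ m : Type*} [CommRing S] [Fintype m] [DecidableEq m]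
    (φ : R →+* S) (A : Matrix ι κ R) (f : m → ι) (g : m → κ) (i : ι) (j : κ) :
    φ (borderedMinor A f g i j) = borderedMinor (A.map φ) f g i j :=
  φ.map_det _

section LeadingMinors

variable {n : ℕ} (A : Matrix (Fin n) (Fin n) R)

theorem pminor_zero : pminor A 0 (Nat.zero_le n) = 1 :=
  det_isEmpty

theorem borderedMinor_castLE_self {m : ℕ} (hm : m < n) :
    borderedMinor A (Fin.castLE hm.le) (Fin.castLE hm.le) ⟨m, hm⟩ ⟨m, hm⟩ =
      pminor A (m + 1) hm := by
  have hidx : Fin.castLE hm ∘ finSumFinEquiv =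
      Sum.elim (Fin.castLE hm.le) fun _ : Fin 1 => (⟨m, hm⟩ : Fin n) := by
    ext (a | a) <;> simp [Fin.fin_one_eq_zero]
  rw [pminor, ← det_submatrix_equiv_self finSumFinEquiv, submatrix_submatrix, hidx]
  rfl

theorem sumElim_castLE_comp_finSumFinEquiv {m : ℕ} (hm : m < n) (i : Fin n) :
    Sum.elim (Fin.castLE hm.le) ![⟨m, hm⟩, i] ∘
        (finSumFinEquiv.trans (finSumFinEquiv (m := m) (n := 2)).symm :
          Fin (m + 1) ⊕ Fin 1 ≃ Fin m ⊕ Fin 2) =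
      Sum.elim (Fin.castLE (m := n) hm) fun _ : Fin 1 => i := by
  ext (a | a)
  · induction a using Fin.lastCases with
    | last =>
      have : (Fin.castAdd 1 (Fin.last m) : Fin (m + 2)) = Fin.natAdd m (0 : Fin 2) :=
        Fin.ext (by simp)
      simp [this]
    | cast b =>
      have : (Fin.castAdd 1 b.castSucc : Fin (m + 2)) = Fin.castAdd 2 b := Fin.ext rfl
      simp [this]
  · have : (Fin.natAdd (m + 1) a : Fin (m + 2)) = Fin.natAdd m (1 : Fin 2) :=
      Fin.ext (by simp [Fin.fin_one_eq_zero a])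
    simp [this]

theorem borderedMinor_castLE_succ_mul_pminor {m : ℕ} (hm : m < n)
    (hunit : IsUnit (pminor A m hm.le)) (i j : Fin n) :
    borderedMinor A (Fin.castLE hm) (Fin.castLE hm) i j * pminor A m hm.le =
      borderedMinor A (Fin.castLE hm.le) (Fin.castLE hm.le) ⟨m, hm⟩ ⟨m, hm⟩ *
          borderedMinor A (Fin.castLE hm.le) (Fin.castLE hm.le) i j -
        borderedMinor A (Fin.castLE hm.le) (Fin.castLE hm.le) ⟨m, hm⟩ j *
          borderedMinor A (Fin.castLE hm.le) (Fin.castLE hm.le) i ⟨m, hm⟩ := by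
  set M : Matrix (Fin m ⊕ Fin 2) (Fin m ⊕ Fin 2) R :=
    A.submatrix (Sum.elim (Fin.castLE hm.le) ![⟨m, hm⟩, i])
      (Sum.elim (Fin.castLE hm.le) ![⟨m, hm⟩, j])
  have hdet : M.det = borderedMinor A (Fin.castLE hm) (Fin.castLE hm) i j := by
    rw [borderedMinor, ← det_submatrix_equiv_self
      (finSumFinEquiv.trans (finSumFinEquiv (m := m) (n := 2)).symm :
        Fin (m + 1) ⊕ Fin 1 ≃ Fin m ⊕ Fin 2), submatrix_submatrix,
      sumElim_castLE_comp_finSumFinEquiv, sumElim_castLE_comp_finSumFinEquiv]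
  have hsylvester := det_mul_det_toBlocks₁₁_eq M hunit
  simp only [M, borderedMinor_submatrix_sumElim] at hsylvester
  rwa [← hdet]

end LeadingMinors

theorem bareiss_eq_borderedMinor {K : Type*} [Field K] {n : ℕ} (A : Matrix (Fin n) (Fin n) K)
    (hp : ∀ k, 1 ≤ k → (hk : k < n) → pminor A k hk.le ≠ 0)
    (α : ℕ → Fin n → Fin n → K)
    (hinit : ∀ i j, α 1 i j = A i j)
    (hrec : ∀ k, 1 ≤ k → (hk : k < n) → ∀ i j : Fin n,
      k ≤ (i : ℕ) → k ≤ (j : ℕ) →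
      α (k + 1) i j =
        (α k ⟨k - 1, by omega⟩ ⟨k - 1, by omega⟩ * α k i j -
            α k i ⟨k - 1, by omega⟩ * α k ⟨k - 1, by omega⟩ j) /
          (if k = 1 then 1 else α (k - 1) ⟨k - 2, by omega⟩ ⟨k - 2, by omega⟩))
    (m : ℕ) (hm : m < n) (i j : Fin n) (hi : m ≤ i) (hj : m ≤ j) :
    α (m + 1) i j = borderedMinor A (Fin.castLE hm.le) (Fin.castLE hm.le) i j := by
  induction m using Nat.strong_induction_on generalizing i j with
  | _ m ih =>
  match m with
  | 0 =>
    rw [hinit, borderedMinor_of_isEmpty]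
  | m + 1 =>
    have hm' : m < n := by omega
    have hr := hrec (m + 1) (by omega) (by omega) i j hi hj
    simp only [Nat.add_sub_cancel, Nat.add_eq_right] at hr
    have hden : (if m = 0 then 1 else α m ⟨m + 1 - 2, by omega⟩ ⟨m + 1 - 2, by omega⟩) =
        pminor A m hm'.le := by
      rcases m with _ | q
      · exact (if_pos rfl).trans (pminor_zero A).symm
      · rw [if_neg q.succ_ne_zero, ← borderedMinor_castLE_self A (by omega : q < n)]
        exact ih q (by omega) (by omega) _ _ le_rfl le_rfl
    have hunit : IsUnit (pminor A m hm'.le) := by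
      rcases m with _ | q
      · simp [pminor_zero]
      · exact (hp (q + 1) (by omega) (by omega)).isUnit
    have hprev : ∀ a b : Fin n, m ≤ a → m ≤ b →
        α (m + 1) a b = borderedMinor A (Fin.castLE hm'.le) (Fin.castLE hm'.le) a b :=
      ih m (by omega) (by omega)
    rw [hr, hden, hprev i j (by omega) (by omega), hprev _ _ le_rfl le_rfl,
      hprev _ _ (by omega) le_rfl, hprev _ _ le_rfl (by omega), div_eq_iff hunit.ne_zero,
      borderedMinor_castLE_succ_mul_pminor A (by omega) hunit]
    ring

/-- Integrality of Bareiss elimination: if `A` is an `n × n` matrix with integer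
entries, regarded as a matrix over `ℚ`, whose leading principal minors
`p_1(A), …, p_{n-1}(A)` are nonzero, and the tableaux `α^{(k)}` satisfy the
Bareiss recursion over `ℚ` (1-indexed), then every entry `α^{(k)}_{i,j}` with
`1 ≤ k ≤ n` and `i, j ≥ k` lies in the image of `ℤ` in `ℚ`. -/
theorem stmt5 {n : ℕ} (B : Matrix (Fin n) (Fin n) ℤ)
    (A : Matrix (Fin n) (Fin n) ℚ)
    (hAB : ∀ i j, A i j = (B i j : ℚ))
    (hp : ∀ k (_ : 1 ≤ k) (_ : k ≤ n - 1), pminor A k (by omega) ≠ 0)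
    (α : ℕ → Fin n → Fin n → ℚ)
    (hinit : ∀ i j, α 1 i j = A i j)
    (hrec : ∀ k (hk1 : 1 ≤ k) (hk : k ≤ n - 1), ∀ i j : Fin n,
      k ≤ (i : ℕ) → k ≤ (j : ℕ) →
      α (k + 1) i j =
        (α k ⟨k - 1, by omega⟩ ⟨k - 1, by omega⟩ * α k i j -
            α k i ⟨k - 1, by omega⟩ * α k ⟨k - 1, by omega⟩ j) /
          (if k = 1 then 1 else α (k - 1) ⟨k - 2, by omega⟩ ⟨k - 2, by omega⟩)) :
    ∀ k (hk1 : 1 ≤ k) (hk : k ≤ n), ∀ i j : Fin n,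
      k - 1 ≤ (i : ℕ) → k - 1 ≤ (j : ℕ) →
      α k i j ∈ Set.range ((↑) : ℤ → ℚ) := by
  intro k hk1 hk i j hi hj
  obtain ⟨m, rfl⟩ : ∃ m, k = m + 1 := ⟨k - 1, by omega⟩
  have hA : A = B.map (Int.castRingHom ℚ) := Matrix.ext hAB
  have hα := bareiss_eq_borderedMinor A (fun k hk1 hk => hp k hk1 (by omega)) α hinit
    (fun k hk1 hk => hrec k hk1 (by omega)) m (by omega) i j (by omega) (by omega)
  rw [hα, hA, ← RingHom.map_borderedMinor]
  exact ⟨_, rfl⟩
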